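/- Let p be a prime, q a positive integer divisible by p, m ≥ 3, 0 ≤ δ < m, and let the functions a^t_σ be defined as in the stated construction. Let t₁, t₂ ∈ {0,…,p^{k+δ}−1}, σ ∈ {0,…,p^k−1}, and let r, s ∈ {0,…,p^m−1} have p-ary digits (r_1,…,r_m), (s_1,…,s_m). Suppose there exist β̂ ∈ {1,…,k} and γ̂ ∈ {2,…,m_{β̂}} such that r_{π_{β̂}(γ)} = s_{π_{β̂}(γ)} for all 1 ≤ γ < γ̂ and r_{π_{β̂}(γ̂)} ≠ s_{π_{β̂}(γ̂)}. For 1 ≤ j ≤ p−1, let r^j and s^j be the integers in {0,…,p^m−1} whose p-ary digits agree with those of r and s respectively, except that the digit in position π_{β̂}(γ̂−1) is replaced by (that digit − j) mod p. Then ω_q^{a^{t₁}_{σ,r} − a^{t₂}_{σ,s}} + Σ_{j=1}^{p−1} ω_q^{a^{t₁}_{σ,r^j} − a^{t₂}_{σ,s^j}} = 0. -/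

import Mathlib

open Finset

/-- `i`-th (1-based) base-`p` digit of `r`, i.e. `r_i` where `r = Σ_i r_i p^(i-1)`. -/
def dig (p r i : ℕ) : ℕ := r / p ^ (i - 1) % p

/-- `ω_q^x = exp(2π√-1·x/q)` for `x ∈ ℤ_q`. -/
noncomputable def eomega (q : ℕ) (x : ZMod q) : ℂ :=
  Complex.exp (2 * Real.pi * Complex.I * (x.val : ℂ) / (q : ℂ))

/-- Aperiodic cross-correlation of two length-`N` `ℤ_q`-valued sequences at integer shift `τ`. -/
noncomputable def ccorr (q N : ℕ) (u v : ℕ → ZMod q) (τ : ℤ) : ℂ :=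
  if 0 ≤ τ then ∑ i ∈ Finset.range (N - τ.toNat), eomega q (u i - v (i + τ.toNat))
  else ∑ i ∈ Finset.range (N - (-τ).toNat), eomega q (u (i + (-τ).toNat) - v i)

/-- Aperiodic autocorrelation. -/
noncomputable def acorr (q N : ℕ) (u : ℕ → ZMod q) (τ : ℤ) : ℂ := ccorr q N u u τ

/-- Entry `a^t_{σ,r}` of the construction: with `(r_1,…,r_m)` the `p`-ary digits of `r`,
`a^t_σ(r) = (q/p) Σ_β Σ_γ r_{π_β(γ)} r_{π_β(γ+1)} + Σ_l λ_l r_l + λ_0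
 + (q/p)(Σ_β σ_β r_{π_β(1)} + Σ_β t_β r_{π_β(m_β)} + Σ_β t_{k+β} r_{m-δ+β})`. -/
def aseq (p q m δ k : ℕ) (mcard : ℕ → ℕ) (pmap : ℕ → ℕ → ℕ) (lam : ℕ → ZMod q)
    (t σ r : ℕ) : ZMod q :=
  (((q / p) * ∑ β ∈ Finset.Icc 1 k, ∑ γ ∈ Finset.Icc 1 (mcard β - 1),
      dig p r (pmap β γ) * dig p r (pmap β (γ + 1)) : ℕ) : ZMod q)
  + ∑ l ∈ Finset.Icc 1 m, lam l * (dig p r l : ZMod q) + lam 0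
  + (((q / p) * (∑ β ∈ Finset.Icc 1 k, dig p σ β * dig p r (pmap β 1)
      + ∑ β ∈ Finset.Icc 1 k, dig p t β * dig p r (pmap β (mcard β))
      + ∑ β ∈ Finset.Icc 1 δ, dig p t (k + β) * dig p r (m - δ + β)) : ℕ) : ZMod q)

/-!
Write `D = a^{t₁}_{σ,r} - a^{t₂}_{σ,s}` and `E = (q/p)(s_{π_β̂(γ̂)} - r_{π_β̂(γ̂)})`. The digit at
`π_β̂(γ̂-1)` is shared by `r` and `s`, so decreasing it by `j` in both changes `D` only through the
edge term `x_{π_β̂(γ̂-1)} x_{π_β̂(γ̂)}`, namely by `jE`. As the two digits differ and lie in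
`[0, p)`, `ω_q^E` is a nontrivial `p`-th root of unity, and the `p` terms `ω_q^{D + jE}` sum to
`ω_q^D` times a vanishing geometric sum.
-/

theorem eomega_eq_stdAddChar {q : ℕ} [NeZero q] (x : ZMod q) :
    eomega q x = ZMod.stdAddChar x := by
  rw [ZMod.stdAddChar_apply, ZMod.toCircle_apply, eomega]

theorem one_add_sum_Icc_pow_eq_zero {K : Type*} [Field K] {z : K} {n : ℕ} (hn : 0 < n)
    (hz : z ≠ 1) (hzn : z ^ n = 1) : 1 + ∑ j ∈ Icc 1 (n - 1), z ^ j = 0 := by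
  have hgeom := sum_range_eq_add_Ico (fun j => z ^ j) hn
  rw [geom_sum_eq hz, hzn, sub_self, zero_div, pow_zero] at hgeom
  rw [Icc_sub_one_right_eq_Ico_of_not_isMin (by simpa using hn.ne'), hgeom]

section Scale

variable {p q : ℕ}

theorem natCast_div_mul_self (hpq : p ∣ q) : ((q / p : ℕ) : ZMod q) * p = 0 := by
  rw [← Nat.cast_mul, Nat.div_mul_cancel hpq, ZMod.natCast_self]

theorem natCast_div_mul_natCast_mod (hpq : p ∣ q) (n : ℕ) :
    ((q / p : ℕ) : ZMod q) * ((n % p : ℕ) : ZMod q) = ((q / p : ℕ) : ZMod q) * n := by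
  conv_rhs => rw [← Nat.mod_add_div n p]
  push_cast
  rw [mul_add, ← mul_assoc, natCast_div_mul_self hpq, zero_mul, add_zero]

theorem stdAddChar_natCast_div_mul_pow [NeZero q] (hpq : p ∣ q) (x : ZMod q) :
    ZMod.stdAddChar (((q / p : ℕ) : ZMod q) * x) ^ p = 1 := by
  rw [← AddChar.map_nsmul_eq_pow, nsmul_eq_mul, ← mul_assoc, mul_comm (p : ZMod q),
    natCast_div_mul_self hpq, zero_mul, AddChar.map_zero_eq_one]

theorem natCast_div_mul_sub_ne_zero (hq : 0 < q) (hpq : p ∣ q) {a b : ℕ} (ha : a < p)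
    (hb : b < p) (hab : a ≠ b) : ((q / p : ℕ) : ZMod q) * ((a : ZMod q) - b) ≠ 0 := by
  obtain ⟨w, rfl⟩ := hpq
  have hw : 0 < w := Nat.pos_of_mul_pos_left hq
  rw [Nat.mul_div_cancel_left w (by omega)]
  intro h
  have hdvd : ((p * w : ℕ) : ℤ) ∣ w * ((a : ℤ) - b) := by
    rw [← ZMod.intCast_zmod_eq_zero_iff_dvd]
    push_cast
    exact h
  push_cast at hdvd
  rw [mul_comm (p : ℤ), mul_dvd_mul_iff_left (by positivity)] at hdvd
  exact hab ((Nat.modEq_iff_dvd.mpr hdvd).eq_of_lt_of_lt hb ha).symm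

end Scale

theorem sum_mul_sub_sum_mul_of_sub_eq {ι R : Type*} [CommRing R] {s : Finset ι} (w : ι → R)
    {x y x' y' : ι → R} (h : ∀ i ∈ s, x' i - y' i = x i - y i) :
    ∑ i ∈ s, w i * x' i - ∑ i ∈ s, w i * y' i = ∑ i ∈ s, w i * x i - ∑ i ∈ s, w i * y i := by
  simp only [← sum_sub_distrib, ← mul_sub]
  exact sum_congr rfl fun i hi => by rw [h i hi]

section Paths

variable {k : ℕ} {mcard : ℕ → ℕ} {pmap : ℕ → ℕ → ℕ}

def pathForm {R : Type*} [CommRing R] (k : ℕ) (mcard : ℕ → ℕ) (pmap : ℕ → ℕ → ℕ)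
    (x : ℕ → R) : R :=
  ∑ β ∈ Icc 1 k, ∑ γ ∈ Icc 1 (mcard β - 1), x (pmap β γ) * x (pmap β (γ + 1))

theorem eq_and_eq_of_pmap_eq {n : ℕ}
    (hpart : ∀ l ∈ Icc 1 n, ∃! bg : ℕ × ℕ,
      bg.1 ∈ Icc 1 k ∧ bg.2 ∈ Icc 1 (mcard bg.1) ∧ pmap bg.1 bg.2 = l)
    {β γ β' γ' : ℕ} (hβ : β ∈ Icc 1 k) (hγ : γ ∈ Icc 1 (mcard β)) (hβ' : β' ∈ Icc 1 k)
    (hγ' : γ' ∈ Icc 1 (mcard β')) (hmem : pmap β' γ' ∈ Icc 1 n)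
    (he : pmap β γ = pmap β' γ') : β = β' ∧ γ = γ' :=
  Prod.ext_iff.mp <| (hpart _ hmem).unique (y₁ := (β, γ)) (y₂ := (β', γ'))
    ⟨hβ, hγ, he⟩ ⟨hβ', hγ', rfl⟩

/-- The edge from `π_b(c-1)` back to `π_b(c-2)` contributes equally to both forms, since `x` and
`y` agree at `π_b(c-2)`. -/
theorem pathForm_sub_pathForm_of_shift {R : Type*} [CommRing R] {x y x' y' : ℕ → R}
    {b c : ℕ} (hb : b ∈ Icc 1 k) (hc : 2 ≤ c ∧ c ≤ mcard b)
    (hpos : ∀ β ∈ Icc 1 k, ∀ γ ∈ Icc 1 (mcard β),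
      pmap β γ = pmap b (c - 1) → β = b ∧ γ = c - 1)
    (hx' : ∀ β ∈ Icc 1 k, ∀ γ ∈ Icc 1 (mcard β),
      pmap β γ ≠ pmap b (c - 1) → x' (pmap β γ) = x (pmap β γ))
    (hy' : ∀ β ∈ Icc 1 k, ∀ γ ∈ Icc 1 (mcard β),
      pmap β γ ≠ pmap b (c - 1) → y' (pmap β γ) = y (pmap β γ))
    (hxy' : x' (pmap b (c - 1)) = y' (pmap b (c - 1)))
    (hxy : ∀ γ, 1 ≤ γ → γ < c → x (pmap b γ) = y (pmap b γ)) :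
    pathForm k mcard pmap x' - pathForm k mcard pmap y'
      = pathForm k mcard pmap x - pathForm k mcard pmap y
        + (x' (pmap b (c - 1)) - x (pmap b (c - 1))) * (x (pmap b c) - y (pmap b c)) := by
  set edge : (ℕ → R) → ℕ → ℕ → R := fun z β γ => z (pmap β γ) * z (pmap β (γ + 1))
  have hd : x (pmap b (c - 1)) = y (pmap b (c - 1)) := hxy (c - 1) (by omega) (by omega)
  have hc1 : c - 1 ∈ Icc 1 (mcard b - 1) := mem_Icc.mpr ⟨by omega, by omega⟩
  have hother : ∀ β ∈ Icc 1 k, ∀ γ ∈ Icc 1 (mcard β - 1), (β, γ) ≠ (b, c - 1) →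
      edge x' β γ - edge y' β γ - (edge x β γ - edge y β γ) = 0 := by
    intro β hβ γ hγ hne
    obtain ⟨hγ1, hγm⟩ := mem_Icc.mp hγ
    have hγ' : γ ∈ Icc 1 (mcard β) := mem_Icc.mpr ⟨hγ1, by omega⟩
    have hγs : γ + 1 ∈ Icc 1 (mcard β) := mem_Icc.mpr ⟨by omega, by omega⟩
    have h1 : pmap β γ ≠ pmap b (c - 1) := fun h => hne (Prod.ext_iff.mpr (hpos β hβ γ hγ' h))
    simp only [edge, hx' β hβ γ hγ' h1, hy' β hβ γ hγ' h1]
    by_cases h2 : pmap β (γ + 1) = pmap b (c - 1)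
    · obtain ⟨rfl, hγc⟩ := hpos β hβ _ hγs h2
      rw [h2, hxy', hd, hxy γ hγ1 (by omega)]
      ring
    · rw [hx' β hβ _ hγs h2, hy' β hβ _ hγs h2]
      ring
  have hsum : pathForm k mcard pmap x' - pathForm k mcard pmap y'
      - (pathForm k mcard pmap x - pathForm k mcard pmap y)
      = edge x' b (c - 1) - edge y' b (c - 1) - (edge x b (c - 1) - edge y b (c - 1)) := by
    simp only [pathForm, ← sum_sub_distrib]
    rw [sum_eq_single_of_mem b hb fun β hβ hβb => sum_eq_zero fun γ hγ =>
        hother β hβ γ hγ fun h => hβb (Prod.ext_iff.mp h).1,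
      sum_eq_single_of_mem (c - 1) hc1 fun γ hγ hγc =>
        hother b hb γ hγ fun h => hγc (Prod.ext_iff.mp h).2]
  have hc' : c ∈ Icc 1 (mcard b) := mem_Icc.mpr ⟨by omega, hc.2⟩
  have hcfix : pmap b c ≠ pmap b (c - 1) := fun h => by have := (hpos b hb c hc' h).2; omega
  simp only [edge, show c - 1 + 1 = c by omega, hx' b hb c hc' hcfix, hy' b hb c hc' hcfix] at hsum
  linear_combination hsum + y (pmap b c) * hxy' - y (pmap b c) * hd

end Paths

section Construction

variable {p q m δ k : ℕ} {mcard : ℕ → ℕ} {pmap : ℕ → ℕ → ℕ}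

theorem aseq_eq (lam : ℕ → ZMod q) (t σ r : ℕ) :
    aseq p q m δ k mcard pmap lam t σ r
      = ((q / p : ℕ) : ZMod q) * pathForm k mcard pmap (fun i => (dig p r i : ZMod q))
        + ∑ l ∈ Icc 1 m, lam l * (dig p r l : ZMod q) + lam 0
        + ((q / p : ℕ) : ZMod q) * (∑ β ∈ Icc 1 k, (dig p σ β : ZMod q) * dig p r (pmap β 1)
          + (∑ β ∈ Icc 1 k, (dig p t β : ZMod q) * dig p r (pmap β (mcard β))
            + ∑ β ∈ Icc 1 δ, (dig p t (k + β) : ZMod q) * dig p r (m - δ + β))) := by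
  simp only [aseq, pathForm, Nat.cast_mul, Nat.cast_sum, Nat.cast_add]
  ring

/-- Outside the quadratic part, the terms reading position `π_b(c-1)` (the `λ`- and `σ`-terms)
have the same coefficients for `r` and `s`, while the `t`-terms never read it: it is not the last
vertex of its path and it lies below `m - δ`. -/
theorem aseq_sub_aseq_of_shift (lam : ℕ → ZMod q) (t₁ t₂ σ : ℕ) (hδ : δ < m)
    (hmcard : ∀ β ∈ Icc 1 k, 1 ≤ mcard β)
    (hmaps : ∀ β ∈ Icc 1 k, ∀ γ ∈ Icc 1 (mcard β), pmap β γ ∈ Icc 1 (m - δ))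
    (hpart : ∀ l ∈ Icc 1 (m - δ), ∃! bg : ℕ × ℕ,
      bg.1 ∈ Icc 1 k ∧ bg.2 ∈ Icc 1 (mcard bg.1) ∧ pmap bg.1 bg.2 = l)
    {b c : ℕ} (hb : b ∈ Icc 1 k) (hc : 2 ≤ c ∧ c ≤ mcard b) {r s r' s' : ℕ}
    (heq : ∀ γ, 1 ≤ γ → γ < c → dig p r (pmap b γ) = dig p s (pmap b γ))
    (hr' : ∀ i ∈ Icc 1 m, i ≠ pmap b (c - 1) → dig p r' i = dig p r i)
    (hs' : ∀ i ∈ Icc 1 m, i ≠ pmap b (c - 1) → dig p s' i = dig p s i)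
    (hrs' : dig p r' (pmap b (c - 1)) = dig p s' (pmap b (c - 1))) :
    aseq p q m δ k mcard pmap lam t₁ σ r' - aseq p q m δ k mcard pmap lam t₂ σ s'
      = aseq p q m δ k mcard pmap lam t₁ σ r - aseq p q m δ k mcard pmap lam t₂ σ s
        + ((q / p : ℕ) : ZMod q)
          * ((dig p r' (pmap b (c - 1)) : ZMod q) - dig p r (pmap b (c - 1)))
          * ((dig p r (pmap b c) : ZMod q) - dig p s (pmap b c)) := by
  have hc1 : c - 1 ∈ Icc 1 (mcard b) := mem_Icc.mpr ⟨by omega, by omega⟩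
  have hl0 : pmap b (c - 1) ∈ Icc 1 (m - δ) := hmaps b hb _ hc1
  have hsub : Icc 1 (m - δ) ⊆ Icc 1 m := Icc_subset_Icc_right (Nat.sub_le m δ)
  have hcell : ∀ β ∈ Icc 1 k, ∀ γ ∈ Icc 1 (mcard β), pmap β γ ∈ Icc 1 m :=
    fun β hβ γ hγ => hsub (hmaps β hβ γ hγ)
  have hpos : ∀ β ∈ Icc 1 k, ∀ γ ∈ Icc 1 (mcard β),
      pmap β γ = pmap b (c - 1) → β = b ∧ γ = c - 1 :=
    fun β hβ γ hγ => eq_and_eq_of_pmap_eq hpart hβ hγ hb hc1 hl0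
  have hdiff : ∀ i ∈ Icc 1 m,
      (dig p r' i : ZMod q) - dig p s' i = (dig p r i : ZMod q) - dig p s i := by
    intro i hi
    by_cases h : i = pmap b (c - 1)
    · rw [h, hrs', heq (c - 1) (by omega) (by omega), sub_self, sub_self]
    · rw [hr' i hi h, hs' i hi h]
  have htail : ∀ (t u u' : ℕ), (∀ i ∈ Icc 1 m, i ≠ pmap b (c - 1) → dig p u' i = dig p u i) →
      ∑ β ∈ Icc 1 k, (dig p t β : ZMod q) * dig p u' (pmap β (mcard β))
        + ∑ β ∈ Icc 1 δ, (dig p t (k + β) : ZMod q) * dig p u' (m - δ + β)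
      = ∑ β ∈ Icc 1 k, (dig p t β : ZMod q) * dig p u (pmap β (mcard β))
        + ∑ β ∈ Icc 1 δ, (dig p t (k + β) : ZMod q) * dig p u (m - δ + β) := by
    intro t u u' hu'
    congr 1
    · refine sum_congr rfl fun β hβ => ?_
      have hlast : mcard β ∈ Icc 1 (mcard β) := mem_Icc.mpr ⟨hmcard β hβ, le_rfl⟩
      rw [hu' _ (hcell β hβ _ hlast) fun h => by
        obtain ⟨rfl, h⟩ := hpos β hβ _ hlast h
        omega]
    · refine sum_congr rfl fun β hβ => ?_
      have := mem_Icc.mp hβ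
      have := mem_Icc.mp hl0
      rw [hu' _ (mem_Icc.mpr ⟨by omega, by omega⟩) (by omega)]
  have hpath := pathForm_sub_pathForm_of_shift (x := fun i => (dig p r i : ZMod q))
    (y := fun i => (dig p s i : ZMod q)) (x' := fun i => (dig p r' i : ZMod q))
    (y' := fun i => (dig p s' i : ZMod q)) hb hc hpos
    (fun β hβ γ hγ h => by rw [hr' _ (hcell β hβ γ hγ) h])
    (fun β hβ γ hγ h => by rw [hs' _ (hcell β hβ γ hγ) h]) (by rw [hrs'])
    (fun γ h1 h2 => by rw [heq γ h1 h2])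
  have hlin := sum_mul_sub_sum_mul_of_sub_eq lam hdiff
  have hhead := sum_mul_sub_sum_mul_of_sub_eq (s := Icc 1 k) (fun β => (dig p σ β : ZMod q))
    (x' := fun β => (dig p r' (pmap β 1) : ZMod q)) (y' := fun β => (dig p s' (pmap β 1) : ZMod q))
    (x := fun β => (dig p r (pmap β 1) : ZMod q)) (y := fun β => (dig p s (pmap β 1) : ZMod q))
    fun β hβ => hdiff _ (hcell β hβ 1 (mem_Icc.mpr ⟨le_rfl, hmcard β hβ⟩))
  simp only [aseq_eq, htail t₁ r r' hr', htail t₂ s s' hs']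
  linear_combination ((q / p : ℕ) : ZMod q) * hpath + hlin + ((q / p : ℕ) : ZMod q) * hhead

theorem aseq_sub_aseq_of_digit_sub (lam : ℕ → ZMod q) (t₁ t₂ σ : ℕ) (hpq : p ∣ q) (hδ : δ < m)
    (hmcard : ∀ β ∈ Icc 1 k, 1 ≤ mcard β)
    (hmaps : ∀ β ∈ Icc 1 k, ∀ γ ∈ Icc 1 (mcard β), pmap β γ ∈ Icc 1 (m - δ))
    (hpart : ∀ l ∈ Icc 1 (m - δ), ∃! bg : ℕ × ℕ,
      bg.1 ∈ Icc 1 k ∧ bg.2 ∈ Icc 1 (mcard bg.1) ∧ pmap bg.1 bg.2 = l)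
    {b c : ℕ} (hb : b ∈ Icc 1 k) (hc : 2 ≤ c ∧ c ≤ mcard b) {r s r' s' j : ℕ} (hj : j ≤ p)
    (heq : ∀ γ, 1 ≤ γ → γ < c → dig p r (pmap b γ) = dig p s (pmap b γ))
    (hr' : ∀ i ∈ Icc 1 m, dig p r' i =
      if i = pmap b (c - 1) then (dig p r i + p - j) % p else dig p r i)
    (hs' : ∀ i ∈ Icc 1 m, dig p s' i =
      if i = pmap b (c - 1) then (dig p s i + p - j) % p else dig p s i) :
    aseq p q m δ k mcard pmap lam t₁ σ r' - aseq p q m δ k mcard pmap lam t₂ σ s'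
      = aseq p q m δ k mcard pmap lam t₁ σ r - aseq p q m δ k mcard pmap lam t₂ σ s
        + j • (((q / p : ℕ) : ZMod q) * ((dig p s (pmap b c) : ZMod q) - dig p r (pmap b c))) := by
  have hl0 : pmap b (c - 1) ∈ Icc 1 m := Icc_subset_Icc_right (Nat.sub_le m δ)
    (hmaps b hb _ (mem_Icc.mpr ⟨by omega, by omega⟩))
  rw [aseq_sub_aseq_of_shift lam t₁ t₂ σ hδ hmcard hmaps hpart hb hc heq
      (fun i hi h => by rw [hr' i hi, if_neg h]) (fun i hi h => by rw [hs' i hi, if_neg h])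
      (by rw [hr' _ hl0, hs' _ hl0, if_pos rfl, if_pos rfl, heq (c - 1) (by omega) (by omega)]),
    hr' _ hl0, if_pos rfl, nsmul_eq_mul]
  have hshift : ((q / p : ℕ) : ZMod q) * (((dig p r (pmap b (c - 1)) + p - j) % p : ℕ) : ZMod q)
      = ((q / p : ℕ) : ZMod q) * dig p r (pmap b (c - 1)) - ((q / p : ℕ) : ZMod q) * j := by
    rw [natCast_div_mul_natCast_mod hpq, Nat.cast_sub (by omega)]
    push_cast
    linear_combination natCast_div_mul_self hpq
  linear_combination ((dig p r (pmap b c) : ZMod q) - dig p s (pmap b c)) * hshift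

end Construction

theorem szccs_case_two_sum_zero_general
    (p q m δ k : ℕ) (hq : 0 < q) (hpq : p ∣ q) (hδ : δ < m)
    (mcard : ℕ → ℕ) (pmap : ℕ → ℕ → ℕ) (lam : ℕ → ZMod q)
    (hmcard : ∀ β ∈ Finset.Icc 1 k, 1 ≤ mcard β)
    (hmaps : ∀ β ∈ Finset.Icc 1 k, ∀ γ ∈ Finset.Icc 1 (mcard β),
      pmap β γ ∈ Finset.Icc 1 (m - δ))
    (hpart : ∀ l ∈ Finset.Icc 1 (m - δ), ∃! bg : ℕ × ℕ,
      bg.1 ∈ Finset.Icc 1 k ∧ bg.2 ∈ Finset.Icc 1 (mcard bg.1) ∧ pmap bg.1 bg.2 = l)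
    (t₁ t₂ : ℕ) (σ : ℕ) (r s : ℕ)
    (b : ℕ) (hb : b ∈ Finset.Icc 1 k)
    (c : ℕ) (hc : 2 ≤ c ∧ c ≤ mcard b)
    (heq : ∀ γ, 1 ≤ γ → γ < c → dig p r (pmap b γ) = dig p s (pmap b γ))
    (hne : dig p r (pmap b c) ≠ dig p s (pmap b c))
    (r' s' : ℕ → ℕ)
    (hr' : ∀ j ∈ Finset.Icc 1 (p - 1), r' j < p ^ m ∧
      ∀ i ∈ Finset.Icc 1 m, dig p (r' j) i =
        if i = pmap b (c - 1) then (dig p r i + p - j) % p else dig p r i)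
    (hs' : ∀ j ∈ Finset.Icc 1 (p - 1), s' j < p ^ m ∧
      ∀ i ∈ Finset.Icc 1 m, dig p (s' j) i =
        if i = pmap b (c - 1) then (dig p s i + p - j) % p else dig p s i) :
    eomega q (aseq p q m δ k mcard pmap lam t₁ σ r
        - aseq p q m δ k mcard pmap lam t₂ σ s)
      + ∑ j ∈ Finset.Icc 1 (p - 1),
        eomega q (aseq p q m δ k mcard pmap lam t₁ σ (r' j)
          - aseq p q m δ k mcard pmap lam t₂ σ (s' j)) = 0 := by
  have : NeZero q := ⟨hq.ne'⟩
  have hp : 0 < p := Nat.pos_of_dvd_of_pos hpq hq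
  have hE : ZMod.stdAddChar (N := q)
      (((q / p : ℕ) : ZMod q) * ((dig p s (pmap b c) : ZMod q) - dig p r (pmap b c))) ≠ 1 := by
    rw [← AddChar.map_zero_eq_one (ZMod.stdAddChar (N := q)), ZMod.injective_stdAddChar.ne_iff]
    exact natCast_div_mul_sub_ne_zero hq hpq (Nat.mod_lt _ hp) (Nat.mod_lt _ hp) (Ne.symm hne)
  simp only [eomega_eq_stdAddChar]
  rw [sum_congr rfl fun j hj => by
      rw [aseq_sub_aseq_of_digit_sub lam t₁ t₂ σ hpq hδ hmcard hmaps hpart hb hc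
          (by have := mem_Icc.mp hj; omega) heq (hr' j hj).2 (hs' j hj).2,
        AddChar.map_add_eq_mul, AddChar.map_nsmul_eq_pow],
    ← mul_sum, ← mul_one_add,
    one_add_sum_Icc_pow_eq_zero hp hE (stdAddChar_natCast_div_mul_pow hpq _), mul_zero]

/-- suppose `β̂ ∈ {1,…,k}` and `γ̂ ∈ {2,…,m_β̂}` satisfy
`r_{π_β̂(γ)} = s_{π_β̂(γ)}` for all `1 ≤ γ < γ̂` and `r_{π_β̂(γ̂)} ≠ s_{π_β̂(γ̂)}`;
for `1 ≤ j ≤ p-1` let `r^j, s^j` agree with `r, s` in all digit positions except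
`π_β̂(γ̂-1)`, where the digit is decreased by `j` modulo `p`.  Then
`ω_q^{a^{t₁}_{σ,r} - a^{t₂}_{σ,s}} + Σ_{j=1}^{p-1} ω_q^{a^{t₁}_{σ,r^j} - a^{t₂}_{σ,s^j}} = 0`. -/
theorem szccs_case_two_sum_zero
    (p q m δ k : ℕ) (hp : p.Prime) (hq : 0 < q) (hpq : p ∣ q)
    (hm : 3 ≤ m) (hδ : δ < m) (hk1 : 1 ≤ k) (hk2 : k ≤ m - δ)
    (mcard : ℕ → ℕ) (pmap : ℕ → ℕ → ℕ) (lam : ℕ → ZMod q)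
    (hmcard : ∀ β ∈ Finset.Icc 1 k, 1 ≤ mcard β)
    (hmaps : ∀ β ∈ Finset.Icc 1 k, ∀ γ ∈ Finset.Icc 1 (mcard β),
      pmap β γ ∈ Finset.Icc 1 (m - δ))
    (hpart : ∀ l ∈ Finset.Icc 1 (m - δ), ∃! bg : ℕ × ℕ,
      bg.1 ∈ Finset.Icc 1 k ∧ bg.2 ∈ Finset.Icc 1 (mcard bg.1) ∧ pmap bg.1 bg.2 = l)
    (t₁ t₂ : ℕ) (ht₁ : t₁ < p ^ (k + δ)) (ht₂ : t₂ < p ^ (k + δ))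
    (σ : ℕ) (hσ : σ < p ^ k)
    (r s : ℕ) (hr : r < p ^ m) (hs : s < p ^ m)
    (b : ℕ) (hb : b ∈ Finset.Icc 1 k)
    (c : ℕ) (hc : 2 ≤ c ∧ c ≤ mcard b)
    (heq : ∀ γ, 1 ≤ γ → γ < c → dig p r (pmap b γ) = dig p s (pmap b γ))
    (hne : dig p r (pmap b c) ≠ dig p s (pmap b c))
    (r' s' : ℕ → ℕ)
    (hr' : ∀ j ∈ Finset.Icc 1 (p - 1), r' j < p ^ m ∧
      ∀ i ∈ Finset.Icc 1 m, dig p (r' j) i =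
        if i = pmap b (c - 1) then (dig p r i + p - j) % p else dig p r i)
    (hs' : ∀ j ∈ Finset.Icc 1 (p - 1), s' j < p ^ m ∧
      ∀ i ∈ Finset.Icc 1 m, dig p (s' j) i =
        if i = pmap b (c - 1) then (dig p s i + p - j) % p else dig p s i) :
    eomega q (aseq p q m δ k mcard pmap lam t₁ σ r
        - aseq p q m δ k mcard pmap lam t₂ σ s)
      + ∑ j ∈ Finset.Icc 1 (p - 1),
        eomega q (aseq p q m δ k mcard pmap lam t₁ σ (r' j)
          - aseq p q m δ k mcard pmap lam t₂ σ (s' j)) = 0 :=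
  szccs_case_two_sum_zero_general p q m δ k hq hpq hδ mcard pmap lam hmcard hmaps hpart t₁ t₂ σ r s
    b hb c hc heq hne r' s' hr' hs'
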